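/- arXiv:2002.03527 — 3 statements merged into one kernel-verified Lean document; each statement's English description precedes it below -/
import Mathlib

section
/- Every chordal graph that is not complete has two non-adjacent simplicial vertices. -/
def IsChordal {V : Type*} (G : SimpleGraph V) : Prop :=
  ∀ n : ℕ, 4 ≤ n → IsEmpty (SimpleGraph.cycleGraph n ↪g G)

def IsSimplicialVertex {V : Type*} (G : SimpleGraph V) (v : V) : Prop :=
  G.IsClique (G.neighborSet v)

def IsNConnectedGraph {V : Type*} [Fintype V] (n : ℕ) (G : SimpleGraph V) : Prop :=
  n < Fintype.card V ∧ ∀ S : Finset V, S.card < n → (G.induce ((↑S : Set V)ᶜ)).Connected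

def IsVertexCut {V : Type*} [Fintype V] (G : SimpleGraph V) (S : Finset V) : Prop :=
  ¬ (G.induce ((↑S : Set V)ᶜ)).Connected

def IsMinimalVertexCut {V : Type*} [Fintype V] (G : SimpleGraph V) (S : Finset V) : Prop :=
  IsVertexCut G S ∧ ∀ S' : Finset V, S'.card < S.card → (G.induce ((↑S' : Set V)ᶜ)).Connected

def IsMaximalClique {V : Type*} (G : SimpleGraph V) (s : Finset V) : Prop :=
  G.IsClique ↑s ∧ ∀ t : Finset V, G.IsClique ↑t → s ⊆ t → s = t

def nbhdFaces {V : Type*} (G : SimpleGraph V) : Set (Finset V) :=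
  {σ | ∃ w, ∀ x ∈ σ, G.Adj w x}

abbrev geomReal {V : Type*} (K : Set (Finset V)) : Type _ :=
  {f : V → ℝ // ∃ σ ∈ K, (∀ v, f v ≠ 0 → v ∈ σ) ∧ (∀ v, 0 ≤ f v) ∧ ∑ v ∈ σ, f v = 1}

def IsNConnectedSpace (k : ℤ) (X : Type*) [TopologicalSpace X] : Prop :=
  ∀ m : ℕ, (m : ℤ) ≤ k →
    ∀ f : C(Metric.sphere (0 : EuclideanSpace ℝ (Fin (m + 1))) 1, X),
      ∃ g : C(Metric.closedBall (0 : EuclideanSpace ℝ (Fin (m + 1))) 1, X),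
        ∀ x : Metric.sphere (0 : EuclideanSpace ℝ (Fin (m + 1))) 1,
          g ⟨x.1, Metric.sphere_subset_closedBall x.2⟩ = f x

structure SimpComplex (V : Type*) where
  faces : Set (Finset V)
  down_closed : ∀ σ ∈ faces, ∀ τ ⊆ σ, τ ∈ faces

def suspSetoid (X : Type*) : Setoid (X × unitInterval) where
  r p q := p = q ∨ (p.2 = 0 ∧ q.2 = 0) ∨ (p.2 = 1 ∧ q.2 = 1)
  iseqv := by
    constructor
    · intro p; exact Or.inl rfl
    · rintro p q (rfl | h | h) <;> tauto
    · rintro p q r (rfl | h | h) (h2 | h2 | h2) <;> simp_all <;> tauto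

abbrev Susp (X : Type*) [TopologicalSpace X] : Type _ := Quotient (suspSetoid X)

def queenGraph (m n : ℕ) : SimpleGraph (Fin m × Fin n) :=
  SimpleGraph.fromRel fun a b =>
    a.1 = b.1 ∨ a.2 = b.2 ∨ |((a.1 : ℕ) : ℤ) - ((b.1 : ℕ) : ℤ)| = |((a.2 : ℕ) : ℤ) - ((b.2 : ℕ) : ℤ)|

def kingGraph (m n : ℕ) : SimpleGraph (Fin m × Fin n) :=
  SimpleGraph.fromRel fun a b =>
    |((a.1 : ℕ) : ℤ) - ((b.1 : ℕ) : ℤ)| ≤ 1 ∧ |((a.2 : ℕ) : ℤ) - ((b.2 : ℕ) : ℤ)| ≤ 1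

/-!
Dirac's argument, by induction on the number of vertices. For non-adjacent `a` and `b`, a
minimum `a`–`b` separator `S` is a clique: two non-adjacent `u, v ∈ S` have neighbours in the
components of both `a` and `b`, and shortest `u`–`v` paths through these two components close up
to an induced cycle of length at least four. The subgraph induced on `S` and the component `A`
of `a` is smaller, so it is complete or has two non-adjacent simplicial vertices, which are not
both in the clique `S`; either way `A` contains a vertex that is simplicial in `G`, as all its
neighbours lie in `A ∪ S`. The same holds for the component of `b`, and no edge joins the two
components.
-/

open SimpleGraph

namespace SimpleGraph.Walk

variable {V : Type*} {G : SimpleGraph V} {u v : V}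

/-- For paths this is `Walk.IsChordless`, phrased through positions along the walk. -/
def IsShortcutFree (p : G.Walk u v) : Prop :=
  ∀ i j, i + 2 ≤ j → j ≤ p.length → ¬ G.Adj (p.getVert i) (p.getVert j)

lemma two_le_length_of_not_adj (p : G.Walk u v) (hne : u ≠ v) (hnadj : ¬ G.Adj u v) :
    2 ≤ p.length :=
  match p with
  | nil => (hne rfl).elim
  | cons h nil => (hnadj h).elim
  | cons _ (cons _ _) => by simp

lemma exists_shorter_of_adj_getVert (p : G.Walk u v) {i j : ℕ} (hij : i + 2 ≤ j)
    (hj : j ≤ p.length) (h : G.Adj (p.getVert i) (p.getVert j)) :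
    ∃ q : G.Walk u v, q.length < p.length ∧ q.support ⊆ p.support := by
  refine ⟨(p.take i).append (cons h (p.drop j)), ?_, fun x hx => ?_⟩
  · simp only [length_append, take_length, length_cons, drop_length]
    omega
  · rw [support_append, support_cons, List.tail_cons, List.mem_append, support_take,
      drop_support_eq_support_drop_min] at hx
    exact hx.elim List.mem_of_mem_take List.mem_of_mem_drop

lemma exists_isPath_isShortcutFree (C : Set V) (w : G.Walk u v)
    (hw : ∀ x ∈ w.support, x ∈ C) :
    ∃ p : G.Walk u v, p.IsPath ∧ p.IsShortcutFree ∧ ∀ x ∈ p.support, x ∈ C := by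
  classical
  obtain ⟨p, hpC, hmin⟩ := (measure fun p : G.Walk u v => p.length).wf.has_min
    {p | ∀ x ∈ p.support, x ∈ C} ⟨w, hw⟩
  have hbC : ∀ x ∈ p.bypass.support, x ∈ C :=
    fun x hx => hpC x (p.support_bypass_subset_support hx)
  refine ⟨p.bypass, p.bypass_isPath, fun i j hij hj h => ?_, hbC⟩
  obtain ⟨q, hq, hqs⟩ := p.bypass.exists_shorter_of_adj_getVert hij hj h
  exact hmin q (fun x hx => hbC x (hqs hx)) (hq.trans_le p.length_bypass_le_length)

lemma IsPath.getVert_mem_of_mem_support {C : Set V} {p : G.Walk u v}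
    (hp : p.IsPath) (hC : ∀ x ∈ p.support, x = u ∨ x = v ∨ x ∈ C) {i : ℕ} (h0 : 0 < i)
    (hi : i < p.length) : p.getVert i ∈ C := by
  rcases hC _ (p.getVert_mem_support i) with h | h | h
  · exact absurd ((hp.getVert_eq_start_iff hi.le).mp h) h0.ne'
  · exact absurd ((hp.getVert_eq_end_iff hi.le).mp h) hi.ne
  · exact h

lemma cycleGraph_isIndContained (c : G.Walk u u) (hinj : Set.InjOn c.getVert {i | i < c.length})
    (hadj : ∀ i j, i < j → j < c.length → G.Adj (c.getVert i) (c.getVert j) →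
      j = i + 1 ∨ (i = 0 ∧ j + 1 = c.length)) :
    cycleGraph c.length ⊴ G := by
  have key : ∀ i j : Fin c.length, i < j →
      (G.Adj (c.getVert i) (c.getVert j) ↔ (i - j).val = 1 ∨ (j - i).val = 1) := by
    intro i j hij
    rw [Fin.coe_sub_iff_lt.mpr hij, Fin.coe_sub_iff_le.mpr hij.le]
    have hij' : i.val < j.val := hij
    constructor
    · intro h
      rcases hadj i j hij' j.2 h with h | h <;> omega
    · rintro (h | h)
      · have h' := c.adj_getVert_succ (i := j) (by omega)
        rw [show j.val + 1 = c.length by omega, getVert_length] at h'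
        rw [show i.val = 0 by omega, c.getVert_zero]
        exact h'.symm
      · simpa [show j.val = i.val + 1 by omega] using c.adj_getVert_succ (i := i) (by omega)
  refine ⟨⟨⟨fun i => c.getVert i, fun i j h => Fin.ext (hinj i.2 j.2 h)⟩, ?_⟩⟩
  intro i j
  change G.Adj (c.getVert i) (c.getVert j) ↔ _
  rw [cycleGraph_adj']
  rcases lt_trichotomy i j with hij | rfl | hij
  · exact key i j hij
  · simp [Fin.coe_sub_iff_le.mpr le_rfl]
  · rw [G.adj_comm, key j i hij, or_comm]

end SimpleGraph.Walk

section Chordal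

variable {V : Type*} {G : SimpleGraph V}

lemma IsChordal.exists_eq_or_adj_of_isShortcutFree (hG : IsChordal G) {u v : V} (hne : u ≠ v)
    (hnadj : ¬ G.Adj u v) {p q : G.Walk u v} (hp : p.IsPath) (hq : q.IsPath)
    (hpc : p.IsShortcutFree) (hqc : q.IsShortcutFree) :
    ∃ i j, 0 < i ∧ i < p.length ∧ 0 < j ∧ j < q.length ∧
      (p.getVert i = q.getVert j ∨ G.Adj (p.getVert i) (q.getVert j)) := by
  by_contra! hdisj
  have hp2 := p.two_le_length_of_not_adj hne hnadj
  have hq2 := q.two_le_length_of_not_adj hne hnadj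
  set c := p.append q.reverse
  have hlen : c.length = p.length + q.length := by simp [c]
  have hcp : ∀ k ≤ p.length, c.getVert k = p.getVert k := fun k hk => by
    simp [c, Walk.getVert_append', hk]
  have hcq : ∀ k, p.length ≤ k → c.getVert k = q.getVert (c.length - k) := fun k hk => by
    simp only [c, Walk.getVert_append, Walk.getVert_reverse, hlen, if_neg (not_lt.mpr hk)]
    congr 1
    omega
  -- apart from `v`, only `u` sees the interior of `q`, and only its first vertex
  have hmixed : ∀ i m, i < p.length → 0 < m → m < q.length →
      p.getVert i ≠ q.getVert m ∧ (G.Adj (p.getVert i) (q.getVert m) → i = 0 ∧ m = 1) := by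
    intro i m hi hm0 hm
    rcases Nat.eq_zero_or_pos i with rfl | hi0
    · rw [p.getVert_zero]
      refine ⟨fun h => ?_, fun h => ⟨rfl, ?_⟩⟩
      · have := (hq.getVert_eq_start_iff hm.le).mp h.symm
        omega
      · by_contra hm1
        exact hqc 0 m (by omega) hm.le (by rwa [q.getVert_zero])
    · exact ⟨(hdisj i m hi0 hi hm0 hm).1, fun h => ((hdisj i m hi0 hi hm0 hm).2 h).elim⟩
  refine (hG c.length (by omega)).false (c.cycleGraph_isIndContained ?_ ?_).some
  · have hlt : ∀ i j, i < j → j < c.length → c.getVert i ≠ c.getVert j := by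
      intro i j hij hj h
      rcases le_or_gt j p.length with hjp | hjp
      · rw [hcp i (by omega), hcp j hjp] at h
        have := hp.getVert_injOn (by simp; omega) (by simp; omega) h
        omega
      rcases le_or_gt p.length i with hip | hip
      · rw [hcq i hip, hcq j (by omega)] at h
        have := hq.getVert_injOn (by simp; omega) (by simp; omega) h
        omega
      · rw [hcp i hip.le, hcq j hjp.le] at h
        exact (hmixed i _ hip (by omega) (by omega)).1 h
    intro i hi j hj h
    simp only [Set.mem_ofPred_eq] at hi hj
    by_contra hij
    rcases lt_or_gt_of_ne hij with hij | hij
    · exact hlt i j hij hj h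
    · exact hlt j i hij hi h.symm
  · intro i j hij hj h
    rcases le_or_gt j p.length with hjp | hjp
    · rw [hcp i (by omega), hcp j hjp] at h
      by_contra hne
      exact hpc i j (by omega) hjp h
    rcases le_or_gt p.length i with hip | hip
    · rw [hcq i hip, hcq j (by omega)] at h
      by_contra hne
      exact hqc _ _ (by omega) (by omega) h.symm
    · rw [hcp i hip.le, hcq j hjp.le] at h
      have := (hmixed i _ hip (by omega) (by omega)).2 h
      omega

end Chordal

namespace SimpleGraph

variable {V : Type*} {G : SimpleGraph V}

lemma Reachable.mem_of_forall_adj {A : Set V} {a b : V} (h : G.Reachable a b) (ha : a ∈ A)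
    (hA : ∀ x y, x ∈ A → G.Adj x y → y ∈ A) : b ∈ A := by
  obtain ⟨w⟩ := h
  induction w with
  | nil => exact ha
  | cons hxy _ ih => exact ih (hA _ _ ha hxy)

variable (G) in
def avoiding (S : Set V) : SimpleGraph V where
  Adj x y := G.Adj x y ∧ x ∉ S ∧ y ∉ S
  symm := ⟨fun _ _ h => ⟨h.1.symm, h.2.2, h.2.1⟩⟩
  loopless := ⟨fun _ h => G.irrefl h.1⟩

lemma avoiding_le (S : Set V) : G.avoiding S ≤ G := fun _ _ h => h.1

lemma not_mem_of_reachable_avoiding {S : Set V} {a x : V} (h : (G.avoiding S).Reachable a x)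
    (ha : a ∉ S) : x ∉ S :=
  h.mem_of_forall_adj (A := Sᶜ) ha fun _ _ _ hxy => hxy.2.2

variable (G) in
def IsSeparator (S : Set V) (a b : V) : Prop :=
  a ∉ S ∧ b ∉ S ∧ ¬ (G.avoiding S).Reachable a b

namespace IsSeparator

variable {S : Set V} {a b : V}

lemma symm (h : G.IsSeparator S a b) : G.IsSeparator S b a :=
  ⟨h.2.1, h.1, fun hr => h.2.2 hr.symm⟩

lemma ne_and_not_adj_of_reachable (h : G.IsSeparator S a b) {x y : V}
    (hx : (G.avoiding S).Reachable a x) (hy : (G.avoiding S).Reachable b y) :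
    x ≠ y ∧ ¬ G.Adj x y := by
  refine ⟨fun hxy => h.2.2 (hx.trans (hxy ▸ hy.symm)), fun hxy => h.2.2 (hx.trans ?_)⟩
  have hxy' : (G.avoiding S).Adj x y :=
    ⟨hxy, not_mem_of_reachable_avoiding hx h.1, not_mem_of_reachable_avoiding hy h.2.1⟩
  exact hxy'.reachable.trans hy.symm

end IsSeparator

lemma isSeparator_compl_pair {a b : V} (hab : a ≠ b) (hnadj : ¬ G.Adj a b) :
    G.IsSeparator {a, b}ᶜ a b := by
  have hbot : G.avoiding {a, b}ᶜ = ⊥ := by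
    ext x y
    simp only [bot_adj, iff_false]
    rintro ⟨hxy, hx, hy⟩
    simp only [Set.mem_compl_iff, Set.mem_insert_iff, Set.mem_singleton_iff, not_or,
      not_and_or, not_not] at hx hy
    rcases hx with rfl | rfl <;> rcases hy with rfl | rfl
    all_goals first | exact G.irrefl hxy | exact hnadj hxy | exact hnadj hxy.symm
  refine ⟨by simp, by simp, ?_⟩
  rw [hbot, reachable_bot]
  exact hab

lemma exists_minimum_isSeparator [Finite V] {a b : V} (hab : a ≠ b) (hnadj : ¬ G.Adj a b) :
    ∃ S : Finset V, G.IsSeparator S a b ∧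
      ∀ T : Finset V, G.IsSeparator T a b → S.card ≤ T.card := by
  classical
  have := Fintype.ofFinite V
  obtain ⟨S, hS, hmin⟩ := (measure Finset.card).wf.has_min {S : Finset V | G.IsSeparator S a b}
    ⟨({a, b} : Finset V)ᶜ, by
      rw [Set.mem_ofPred_eq, Finset.coe_compl, Finset.coe_pair]
      exact isSeparator_compl_pair hab hnadj⟩
  exact ⟨S, hS, fun T hT => not_lt.mp (hmin T hT)⟩

namespace IsSeparator

variable {S : Finset V} {a b : V}

lemma exists_reachable_adj_of_minimum (h : G.IsSeparator S a b)
    (hmin : ∀ T : Finset V, G.IsSeparator T a b → S.card ≤ T.card) {s : V} (hs : s ∈ S) :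
    ∃ t, (G.avoiding S).Reachable a t ∧ G.Adj t s := by
  classical
  by_contra! hno
  -- without a neighbour of `s`, the component of `a` is also closed in `G` avoiding `S \ {s}`
  have hsep : G.IsSeparator (S.erase s) a b := by
    refine ⟨fun ha => h.1 (Finset.mem_of_mem_erase ha),
      fun hb => h.2.1 (Finset.mem_of_mem_erase hb), fun hr => h.2.2 ?_⟩
    refine hr.mem_of_forall_adj (A := {x | (G.avoiding S).Reachable a x}) .rfl ?_
    intro x y hx hxy
    have hys : y ≠ s := by
      rintro rfl
      exact hno x hx hxy.1
    have hxy' : (G.avoiding S).Adj x y :=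
      ⟨hxy.1, not_mem_of_reachable_avoiding hx h.1,
        fun hy => hxy.2.2 (Finset.mem_erase.mpr ⟨hys, hy⟩)⟩
    exact hx.trans hxy'.reachable
  have := hmin _ hsep
  have := Finset.card_erase_lt_of_mem hs
  omega

lemma exists_walk_of_minimum (h : G.IsSeparator S a b)
    (hmin : ∀ T : Finset V, G.IsSeparator T a b → S.card ≤ T.card) {u v : V} (hu : u ∈ S)
    (hv : v ∈ S) :
    ∃ w : G.Walk u v, ∀ x ∈ w.support, x = u ∨ x = v ∨ (G.avoiding S).Reachable a x := by
  classical
  obtain ⟨tu, hatu, htuu⟩ := h.exists_reachable_adj_of_minimum hmin hu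
  obtain ⟨tv, hatv, htvv⟩ := h.exists_reachable_adj_of_minimum hmin hv
  obtain ⟨w⟩ := hatu.symm.trans hatv
  refine ⟨Walk.cons htuu.symm ((w.mapLe (avoiding_le _)).concat htvv), fun x hx => ?_⟩
  simp only [Walk.support_cons, Walk.support_concat, Walk.support_mapLe_eq_support, List.mem_cons,
    List.mem_append, List.not_mem_nil, or_false] at hx
  rcases hx with rfl | hx | rfl
  · exact .inl rfl
  · exact .inr (.inr (hatu.trans ⟨w.takeUntil x hx⟩))
  · exact .inr (.inl rfl)

end IsSeparator

end SimpleGraph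

section Dirac

variable {V : Type*} {G : SimpleGraph V}

lemma IsChordal.induce (hG : IsChordal G) (s : Set V) : IsChordal (G.induce s) :=
  fun n hn => ⟨fun e => (hG n hn).false ((Embedding.induce s).comp e)⟩

lemma IsChordal.isClique_of_minimum_isSeparator (hG : IsChordal G) {S : Finset V} {a b : V}
    (hS : G.IsSeparator S a b)
    (hmin : ∀ T : Finset V, G.IsSeparator T a b → S.card ≤ T.card) :
    G.IsClique (S : Set V) := by
  intro u hu v hv hne
  by_contra hnadj
  obtain ⟨wa, hwa⟩ := hS.exists_walk_of_minimum hmin hu hv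
  obtain ⟨wb, hwb⟩ := hS.symm.exists_walk_of_minimum (fun T hT => hmin T hT.symm) hu hv
  obtain ⟨p, hp, hpc, hpa⟩ := wa.exists_isPath_isShortcutFree _ hwa
  obtain ⟨q, hq, hqc, hqb⟩ := wb.exists_isPath_isShortcutFree _ hwb
  obtain ⟨i, j, hi0, hi, hj0, hj, h⟩ :=
    hG.exists_eq_or_adj_of_isShortcutFree hne hnadj hp hq hpc hqc
  have hx := hp.getVert_mem_of_mem_support hpa hi0 hi
  have hy := hq.getVert_mem_of_mem_support hqb hj0 hj
  obtain ⟨hxy, hnadj'⟩ := hS.ne_and_not_adj_of_reachable hx hy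
  exact h.elim hxy hnadj'

lemma IsSimplicialVertex.of_induce {s : Set V} {x : s}
    (hx : IsSimplicialVertex (G.induce s) x) (hN : G.neighborSet x ⊆ s) :
    IsSimplicialVertex G x := fun y hy z hz hyz =>
  hx (show (⟨y, hN hy⟩ : s) ∈ _ from hy) (show (⟨z, hN hz⟩ : s) ∈ _ from hz)
    (fun h => hyz (congrArg Subtype.val h))

lemma exists_isSimplicialVertex_mem_of_isClique {A S : Set V} (hS : G.IsClique S)
    (hN : ∀ x ∈ A, G.neighborSet x ⊆ A ∪ S) (hA : A.Nonempty)
    (hind : G.induce (A ∪ S) ≠ ⊤ →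
      ∃ x y : ↥(A ∪ S), x ≠ y ∧ ¬ (G.induce (A ∪ S)).Adj x y ∧
      IsSimplicialVertex (G.induce (A ∪ S)) x ∧ IsSimplicialVertex (G.induce (A ∪ S)) y) :
    ∃ x ∈ A, IsSimplicialVertex G x := by
  by_cases htop : G.induce (A ∪ S) = ⊤
  · obtain ⟨a, ha⟩ := hA
    refine ⟨a, ha, IsSimplicialVertex.of_induce (x := ⟨a, .inl ha⟩) ?_ (hN a ha)⟩
    rw [htop]
    exact fun _ _ _ _ h => h
  obtain ⟨x, y, hxy, hnadj, hx, hy⟩ := hind htop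
  rcases x.2 with hxA | hxS
  · exact ⟨x, hxA, hx.of_induce (hN x hxA)⟩
  rcases y.2 with hyA | hyS
  · exact ⟨y, hyA, hy.of_induce (hN y hyA)⟩
  exact (hnadj (hS hxS hyS (fun h => hxy (Subtype.ext h)))).elim

lemma SimpleGraph.IsSeparator.exists_isSimplicialVertex {S : Set V} {a b : V}
    (h : G.IsSeparator S a b) (hS : G.IsClique S)
    (hind : ∀ s : Set V, b ∉ s → G.induce s ≠ ⊤ →
      ∃ x y : s, x ≠ y ∧ ¬ (G.induce s).Adj x y ∧
      IsSimplicialVertex (G.induce s) x ∧ IsSimplicialVertex (G.induce s) y) :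
    ∃ x, (G.avoiding S).Reachable a x ∧ IsSimplicialVertex G x := by
  set A := {x | (G.avoiding S).Reachable a x}
  have hN : ∀ x ∈ A, G.neighborSet x ⊆ A ∪ S := fun x hx y hxy => by
    by_cases hy : y ∈ S
    · exact .inr hy
    · exact .inl (Reachable.trans hx (Adj.reachable
        ⟨hxy, not_mem_of_reachable_avoiding hx h.1, hy⟩))
  have hb : b ∉ A ∪ S := fun hb => hb.elim h.2.2 h.2.1
  exact exists_isSimplicialVertex_mem_of_isClique hS hN ⟨a, Reachable.refl a⟩ (hind _ hb)

end Dirac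

theorem stmt2 {V : Type*} [Fintype V] (G : SimpleGraph V) (hchord : IsChordal G)
    (hnc : G ≠ ⊤) :
    ∃ u v : V, u ≠ v ∧ ¬ G.Adj u v ∧ IsSimplicialVertex G u ∧ IsSimplicialVertex G v := by
  induction hn : Fintype.card V using Nat.strong_induction_on generalizing V with
  | _ n IH =>
  classical
  obtain ⟨a, b, hab, hnadj⟩ : ∃ a b, a ≠ b ∧ ¬ G.Adj a b := by
    by_contra! h
    exact hnc (eq_top_iff.mpr fun x y hxy => h x y hxy)
  obtain ⟨S, hS, hmin⟩ := exists_minimum_isSeparator hab hnadj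
  have hclique := hchord.isClique_of_minimum_isSeparator hS hmin
  have side : ∀ {a b}, G.IsSeparator S a b →
      ∃ x, (G.avoiding S).Reachable a x ∧ IsSimplicialVertex G x := fun h =>
    h.exists_isSimplicialVertex hclique fun s hb htop =>
      IH _ (hn ▸ Fintype.card_subtype_lt hb) (G.induce s) (hchord.induce s) htop rfl
  obtain ⟨x, hx, hxs⟩ := side hS
  obtain ⟨y, hy, hys⟩ := side hS.symm
  exact ⟨x, y, (hS.ne_and_not_adj_of_reachable hx hy).1,
    (hS.ne_and_not_adj_of_reachable hx hy).2, hxs, hys⟩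
end

section
/- Let n ≥ 1 and let G be an n-connected non-complete chordal graph. Let v be a simplicial vertex of G such that G − v is n-connected. Then for any subset T of N_G(v) with |T| ≤ n, there exists a vertex v' ≠ v of G such that T ⊆ N_G(v'). -/
lemma fin_cycle_adj {k : ℕ} (a b : Fin (k+3)) :
    (SimpleGraph.cycleGraph (k+3)).Adj a b ↔
      ((b:ℕ)+1 = (a:ℕ) ∨ (a:ℕ)+1 = (b:ℕ) ∨ ((a:ℕ) = 0 ∧ (b:ℕ) = k+2) ∨
        ((b:ℕ) = 0 ∧ (a:ℕ) = k+2)) := by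
  have hsub : ∀ u w : Fin (k+3), (u - w = 1) ↔
      ((w:ℕ)+1 = (u:ℕ) ∨ ((w:ℕ) = k+2 ∧ (u:ℕ) = 0)) := by
    intro u w
    rw [sub_eq_iff_eq_add, Fin.ext_iff, Fin.val_add, Fin.val_one]
    have hw : (w:ℕ) < k+3 := w.isLt
    have hu : (u:ℕ) < k+3 := u.isLt
    rcases Nat.lt_or_ge ((w:ℕ)+1) (k+3) with h | h
    · rw [Nat.add_comm 1 (w:ℕ), Nat.mod_eq_of_lt h]
      omega
    · have hw2 : (w:ℕ) = k+2 := by omega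
      have : (1 + (w:ℕ)) % (k+3) = 0 := by
        rw [show 1 + (w:ℕ) = k+3 by omega, Nat.mod_self]
      rw [this]
      omega
  have h := SimpleGraph.cycleGraph_adj (n := k+1) (u := a) (v := b)
  rw [h, hsub, hsub]
  omega

lemma lemC {V : Type*} {G : SimpleGraph V} (hchord : IsChordal G)
    (k : ℕ) (hk : 1 ≤ k) (x : ℕ → V) (s t : V)
    (hinj : ∀ i j, i ≤ k → j ≤ k → x i = x j → i = j)
    (hadj : ∀ i, i < k → G.Adj (x i) (x (i+1)))
    (hchfree : ∀ i j, i + 2 ≤ j → j ≤ k → ¬ G.Adj (x i) (x j))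
    (hs0 : G.Adj s (x 0)) (hsx : ∀ j, 1 ≤ j → j ≤ k → ¬ G.Adj s (x j))
    (htk : G.Adj t (x k)) (htx : ∀ i, i < k → ¬ G.Adj t (x i))
    (hst : G.Adj s t)
    (hsnot : ∀ i, i ≤ k → s ≠ x i) (htnot : ∀ i, i ≤ k → t ≠ x i)
    (hsne : s ≠ t) : False := by
  set c' : ℕ → V := fun i => if i = 0 then s else if i ≤ k+1 then x (i-1) else t with hc'
  have hc0 : c' 0 = s := by simp [hc']
  have hcx : ∀ i, 1 ≤ i → i ≤ k+1 → c' i = x (i-1) := by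
    intro i h1 h2; simp only [hc']; rw [if_neg (by omega), if_pos h2]
  have hct : c' (k+2) = t := by simp only [hc']; rw [if_neg (by omega), if_neg (by omega)]
  have one : ∀ i j, i ≤ j → j < k+3 →
      (G.Adj (c' i) (c' j) ↔ (j+1 = i ∨ i+1 = j ∨ (i=0 ∧ j=k+2) ∨ (j=0 ∧ i=k+2))) := by
    intro i j hij hj
    rcases Nat.eq_or_lt_of_le hij with rfl | hlt
    · rw [iff_iff_implies_and_implies]
      exact ⟨fun h => absurd h (G.irrefl), fun h => by omega⟩
    rcases Nat.eq_zero_or_pos i with rfl | hi1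
    · rw [hc0]
      rcases Nat.lt_or_ge j (k+2) with hj2 | hj2
      · rw [hcx j (by omega) (by omega)]
        constructor
        · intro h
          rcases Nat.eq_zero_or_pos (j-1) with hj0 | hj0
          · omega
          · exact absurd h (hsx (j-1) (by omega) (by omega))
        · intro h
          have : j = 1 := by omega
          subst this; simpa using hs0
      · have : j = k+2 := by omega
        subst this
        rw [hct]
        rw [iff_iff_implies_and_implies]
        exact ⟨fun _ => by omega, fun _ => hst⟩
    · rcases Nat.lt_or_ge j (k+2) with hj2 | hj2
      · rw [hcx i (by omega) (by omega), hcx j (by omega) (by omega)]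
        constructor
        · intro h
          by_contra hcon
          have : (i-1) + 2 ≤ (j-1) := by omega
          exact hchfree (i-1) (j-1) this (by omega) h
        · intro h
          have hj1 : j = i + 1 := by omega
          have := hadj (i-1) (by omega)
          rw [show i - 1 + 1 = j - 1 by omega] at this
          exact this
      · have hjeq : j = k+2 := by omega
        subst hjeq
        rw [hcx i (by omega) (by omega), hct, G.adj_comm]
        constructor
        · intro h
          rcases Nat.lt_or_ge (i-1) k with hik | hik
          · exact absurd h (htx (i-1) hik)
          · omega
        · intro h
          have : i = k+1 := by omega
          rw [show i - 1 = k by omega]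
          exact htk
  have key : ∀ i j, i < k+3 → j < k+3 →
      (G.Adj (c' i) (c' j) ↔ (j+1 = i ∨ i+1 = j ∨ (i=0 ∧ j=k+2) ∨ (j=0 ∧ i=k+2))) := by
    intro i j hi hj
    rcases le_total i j with h | h
    · exact one i j h hj
    · rw [G.adj_comm, one j i h hi]; tauto
  have hcinj : ∀ i j, i < k+3 → j < k+3 → c' i = c' j → i = j := by
    intro i j hi hj hcc
    rcases Nat.eq_zero_or_pos i with rfl | hi1 <;> rcases Nat.eq_zero_or_pos j with rfl | hj1
    · rfl
    · rcases Nat.lt_or_ge j (k+2) with hj2 | hj2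
      · rw [hc0, hcx j (by omega) (by omega)] at hcc
        exact absurd hcc (hsnot (j-1) (by omega))
      · rw [hc0, show j = k+2 by omega, hct] at hcc
        exact absurd hcc hsne
    · rcases Nat.lt_or_ge i (k+2) with hi2 | hi2
      · rw [hc0, hcx i (by omega) (by omega)] at hcc
        exact absurd hcc.symm (hsnot (i-1) (by omega))
      · rw [hc0, show i = k+2 by omega, hct] at hcc
        exact absurd hcc.symm hsne
    · rcases Nat.lt_or_ge i (k+2) with hi2 | hi2 <;> rcases Nat.lt_or_ge j (k+2) with hj2 | hj2
      · rw [hcx i (by omega) (by omega), hcx j (by omega) (by omega)] at hcc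
        have := hinj (i-1) (j-1) (by omega) (by omega) hcc
        omega
      · rw [hcx i (by omega) (by omega), show j = k+2 by omega, hct] at hcc
        exact absurd hcc.symm (htnot (i-1) (by omega))
      · rw [hcx j (by omega) (by omega), show i = k+2 by omega, hct] at hcc
        exact absurd hcc (htnot (j-1) (by omega))
      · omega
  have e : SimpleGraph.cycleGraph (k+3) ↪g G := by
    refine ⟨⟨fun i => c' i.val, ?_⟩, ?_⟩
    · intro a b hab
      exact Fin.ext (hcinj a.val b.val a.isLt b.isLt hab)
    · intro a b
      show G.Adj (c' a.val) (c' b.val) ↔ _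
      rw [key a.val b.val a.isLt b.isLt, fin_cycle_adj]
  exact (hchord (k+3) (by omega)).false e


lemma lemL {V : Type*} {G : SimpleGraph V} (hchord : IsChordal G)
    (C : Set V) (hne : C.Nonempty)
    (hCconn : ∀ a ∈ C, ∀ b ∈ C, ∃ (x : ℕ → V) (k : ℕ), x 0 = a ∧ x k = b ∧
      (∀ i < k, G.Adj (x i) (x (i+1))) ∧ (∀ i ≤ k, x i ∈ C))
    (T : Finset V) (hclique : ∀ s ∈ T, ∀ t ∈ T, s ≠ t → G.Adj s t)
    (hdisj : ∀ t ∈ T, t ∉ C)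
    (hfull : ∀ t ∈ T, ∃ c ∈ C, G.Adj t c) :
    ∃ w ∈ C, ∀ t ∈ T, G.Adj w t := by
  classical
  revert hclique hdisj hfull
  induction T using Finset.induction_on with
  | empty =>
    intro _ _ _
    obtain ⟨w, hw⟩ := hne
    exact ⟨w, hw, by simp⟩
  | @insert t0 T' ht0nm ih =>
    intro hclique hdisj hfull
    obtain ⟨w, hwC, hwT'⟩ := ih
      (fun s hs t ht hne' => hclique s (Finset.mem_insert_of_mem hs) t
        (Finset.mem_insert_of_mem ht) hne')
      (fun t ht => hdisj t (Finset.mem_insert_of_mem ht))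
      (fun t ht => hfull t (Finset.mem_insert_of_mem ht))
    by_cases hwt0 : G.Adj w t0
    · refine ⟨w, hwC, fun t ht => ?_⟩
      rcases Finset.mem_insert.mp ht with rfl | ht'
      · exact hwt0
      · exact hwT' t ht'
    -- main construction
    have hst_t0 : ∀ s ∈ T', G.Adj s t0 := by
      intro s hs
      exact hclique s (Finset.mem_insert_of_mem hs) t0 (Finset.mem_insert_self _ _)
        (fun h => ht0nm (h ▸ hs))
    have ht0C : t0 ∉ C := hdisj t0 (Finset.mem_insert_self _ _)
    have hT'C : ∀ s ∈ T', s ∉ C := fun s hs => hdisj s (Finset.mem_insert_of_mem hs)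
    set Q : ℕ → Prop := fun k => ∃ x : ℕ → V, (∀ i < k, G.Adj (x i) (x (i+1))) ∧
      (∀ i ≤ k, x i ∈ C) ∧ (∀ s ∈ T', G.Adj (x 0) s) ∧ G.Adj t0 (x k) with hQdef
    have hQex : ∃ k, Q k := by
      obtain ⟨c, hcC, hct0⟩ := hfull t0 (Finset.mem_insert_self _ _)
      obtain ⟨x, k, hx0, hxk, hxadj, hxmem⟩ := hCconn w hwC c hcC
      exact ⟨k, x, hxadj, hxmem, fun s hs => hx0 ▸ hwT' s hs, hxk ▸ hct0⟩
    have hk0spec : Q (Nat.find hQex) := Nat.find_spec hQex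
    set k0 := Nat.find hQex with hk0def
    rw [hQdef] at hk0spec
    obtain ⟨x, hxadj, hxmem, hxfull, hxt0⟩ := hk0spec
    -- (1) no earlier t0-neighbour
    have hnt0 : ∀ i, i < k0 → ¬ G.Adj t0 (x i) := by
      intro i hi hadj
      exact Nat.find_min hQex hi ⟨x, fun i' hi' => hxadj i' (by omega),
        fun i' hi' => hxmem i' (by omega), hxfull, hadj⟩
    -- (2) no later full vertex
    have hnofull : ∀ i, 1 ≤ i → i ≤ k0 → ¬ (∀ s ∈ T', G.Adj (x i) s) := by
      intro i h1 h2 hfl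
      refine Nat.find_min hQex (show k0 - i < k0 by omega) ⟨fun j => x (i + j), ?_, ?_, ?_, ?_⟩
      · intro j hj
        beta_reduce
        have := hxadj (i + j) (by omega)
        rwa [show i + (j+1) = i + j + 1 by omega]
      · intro j hj; exact hxmem (i + j) (by omega)
      · simpa using hfl
      · beta_reduce
        rw [show i + (k0 - i) = k0 by omega]; exact hxt0
    -- (3) injectivity
    have hinj : ∀ i j, i ≤ k0 → j ≤ k0 → x i = x j → i = j := by
      have key : ∀ i j, i < j → j ≤ k0 → x i = x j → False := by
        intro i j hij hjk heq
        rcases Nat.eq_or_lt_of_le hjk with rfl | hjlt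
        · exact Nat.find_min hQex (show i < k0 by omega)
            ⟨x, fun i' hi' => hxadj i' (by omega), fun i' hi' => hxmem i' (by omega),
              hxfull, heq ▸ hxt0⟩
        · refine Nat.find_min hQex (show k0 - (j - i) < k0 by omega)
            ⟨fun m => if m ≤ i then x m else x (m + (j - i)), ?_, ?_, ?_, ?_⟩
          · intro m hm
            beta_reduce
            rcases Nat.lt_or_ge m i with h | h
            · rw [if_pos (by omega), if_pos (by omega)]; exact hxadj m (by omega)
            · rcases Nat.eq_or_lt_of_le h with heq2 | h'
              · 
                rw [if_pos (show m ≤ i by omega), if_neg (show ¬ m + 1 ≤ i by omega),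
                  show m + 1 + (j - i) = j + 1 by omega, show m = i from heq2.symm, heq]
                exact hxadj j (by omega)
              · rw [if_neg (by omega), if_neg (by omega), show m + 1 + (j-i) = m + (j-i) + 1 by omega]
                exact hxadj (m + (j - i)) (by omega)
          · intro m hm
            beta_reduce
            split
            · exact hxmem m (by omega)
            · exact hxmem (m + (j - i)) (by omega)
          · beta_reduce
            rw [if_pos (Nat.zero_le _)]; exact hxfull
          · beta_reduce
            rw [if_neg (by omega), show k0 - (j-i) + (j-i) = k0 by omega]; exact hxt0
      intro i j hi hj heq
      rcases Nat.lt_trichotomy i j with h | h | h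
      · exact absurd heq (fun e => key i j h hj e)
      · exact h
      · exact absurd heq (fun e => key j i h hi e.symm)
    -- (4) chord-free
    have hchfree : ∀ i j, i + 2 ≤ j → j ≤ k0 → ¬ G.Adj (x i) (x j) := by
      intro i j hij hjk hadjc
      refine Nat.find_min hQex (show k0 - (j - i - 1) < k0 by omega)
        ⟨fun m => if m ≤ i then x m else x (m + (j - i - 1)), ?_, ?_, ?_, ?_⟩
      · intro m hm
        beta_reduce
        rcases Nat.lt_or_ge m i with h | h
        · rw [if_pos (by omega), if_pos (by omega)]; exact hxadj m (by omega)
        · rcases Nat.eq_or_lt_of_le h with heq2 | h'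
          · rw [if_pos (show m ≤ i by omega), if_neg (show ¬ m + 1 ≤ i by omega),
              show m + 1 + (j - i - 1) = j by omega, show m = i from heq2.symm]
            exact hadjc
          · rw [if_neg (by omega), if_neg (by omega),
              show m + 1 + (j-i-1) = m + (j-i-1) + 1 by omega]
            exact hxadj (m + (j - i - 1)) (by omega)
      · intro m hm
        beta_reduce
        split
        · exact hxmem m (by omega)
        · exact hxmem (m + (j - i - 1)) (by omega)
      · beta_reduce
        rw [if_pos (Nat.zero_le _)]; exact hxfull
      · beta_reduce
        rw [if_neg (by omega), show k0 - (j-i-1) + (j-i-1) = k0 by omega]; exact hxt0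
    rcases Nat.eq_zero_or_pos k0 with hk00 | hk01
    · refine ⟨x 0, hxmem 0 (by omega), fun t ht => ?_⟩
      rcases Finset.mem_insert.mp ht with rfl | ht'
      · rw [hk00] at hxt0; exact hxt0.symm
      · exact hxfull t ht'
    exfalso
    have hT'notC : ∀ s ∈ T', ∀ i, i ≤ k0 → s ≠ x i :=
      fun s hs i hi he => hT'C s hs (he ▸ hxmem i hi)
    have ht0notC : ∀ i, i ≤ k0 → t0 ≠ x i :=
      fun i hi he => ht0C (he ▸ hxmem i hi)
    -- Claim A
    have claimA : ∀ s ∈ T', G.Adj s (x k0) ∨ G.Adj s (x (k0 - 1)) := by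
      intro s hs
      by_contra hcon
      push_neg at hcon
      obtain ⟨hnsk, hnsk1⟩ := hcon
      set jstar := Nat.findGreatest (fun j => G.Adj s (x j)) k0 with hjdef
      have hjP : G.Adj s (x jstar) := by
        exact Nat.findGreatest_spec (P := fun j => G.Adj s (x j)) (n := k0) (Nat.zero_le _)
          ((hxfull s hs).symm)
      have hjle : jstar ≤ k0 := Nat.findGreatest_le (P := fun j => G.Adj s (x j)) k0
      have hjmax : ∀ j, jstar < j → j ≤ k0 → ¬ G.Adj s (x j) := by
        intro j h1 h2
        exact Nat.findGreatest_is_greatest (P := fun j => G.Adj s (x j)) (n := k0) h1 h2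
      have hjne : jstar ≠ k0 := fun h => hnsk (h ▸ hjP)
      have hjne1 : jstar ≠ k0 - 1 := fun h => hnsk1 (h ▸ hjP)
      refine lemC hchord (k0 - jstar) (by omega) (fun i => x (jstar + i)) s t0
        ?_ ?_ ?_ ?_ ?_ ?_ ?_ ?_ ?_ ?_ ?_
      · intro i j hi hj he
        have := hinj (jstar + i) (jstar + j) (by omega) (by omega) he
        omega
      · intro i hi
        beta_reduce
        have := hxadj (jstar + i) (by omega)
        rwa [show jstar + (i+1) = jstar + i + 1 by omega]
      · intro i j hij hjk
        beta_reduce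
        exact hchfree (jstar + i) (jstar + j) (by omega) (by omega)
      · beta_reduce
        rwa [Nat.add_zero]
      · intro j h1 h2
        beta_reduce
        exact hjmax (jstar + j) (by omega) (by omega)
      · beta_reduce
        rw [show jstar + (k0 - jstar) = k0 by omega]; exact hxt0
      · intro i hi
        exact hnt0 (jstar + i) (by omega)
      · exact hst_t0 s hs
      · intro i hi; exact hT'notC s hs (jstar + i) (by omega)
      · intro i hi; exact ht0notC (jstar + i) (by omega)
      · exact fun h => ht0nm (h ▸ hs)
    -- Claim B and contradiction
    have hnf := hnofull k0 hk01 (le_refl _)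
    push_neg at hnf
    obtain ⟨s1, hs1, hns1⟩ := hnf
    have hns1' : ¬ G.Adj s1 (x k0) := fun h => hns1 h.symm
    have hs1k1 : G.Adj s1 (x (k0 - 1)) := (claimA s1 hs1).resolve_left hns1'
    refine lemC hchord 1 (le_refl _) (fun i => x (k0 - 1 + i)) s1 t0
      ?_ ?_ ?_ ?_ ?_ ?_ ?_ ?_ ?_ ?_ ?_
    · intro i j hi hj he
      have := hinj (k0 - 1 + i) (k0 - 1 + j) (by omega) (by omega) he
      omega
    · intro i hi
      beta_reduce
      have hi0 : i = 0 := by omega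
      subst hi0
      have := hxadj (k0 - 1) (by omega)
      rwa [show k0 - 1 + 0 = k0 - 1 by omega, show k0 - 1 + (0 + 1) = k0 - 1 + 1 by omega]
    · intro i j hij hjk; omega
    · beta_reduce
      rwa [Nat.add_zero]
    · intro j h1 h2
      beta_reduce
      have hj1 : j = 1 := by omega
      subst hj1
      rwa [show k0 - 1 + 1 = k0 by omega]
    · beta_reduce
      rw [show k0 - 1 + 1 = k0 by omega]; exact hxt0
    · intro i hi
      beta_reduce
      have hi0 : i = 0 := by omega
      subst hi0
      rw [Nat.add_zero]
      exact hnt0 (k0 - 1) (by omega)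
    · exact hst_t0 s1 hs1
    · intro i hi; exact hT'notC s1 hs1 (k0 - 1 + i) (by omega)
    · intro i hi; exact ht0notC (k0 - 1 + i) (by omega)
    · exact fun h => ht0nm (h ▸ hs1)


lemma chain_of_induce_connected {W : Type*} (H : SimpleGraph W) (A : Set W)
    (hconn : (H.induce A).Connected) {a b : W} (ha : a ∈ A) (hb : b ∈ A) :
    ∃ (x : ℕ → W) (k : ℕ), x 0 = a ∧ x k = b ∧ (∀ i < k, H.Adj (x i) (x (i+1))) ∧
      ∀ i ≤ k, x i ∈ A := by
  obtain ⟨p⟩ := hconn.preconnected ⟨a, ha⟩ ⟨b, hb⟩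
  refine ⟨fun i => (p.getVert i).val, p.length, by simp, by simp, ?_, fun i _ => (p.getVert i).2⟩
  intro i hi
  exact p.adj_getVert_succ hi

theorem stmt5' {V : Type*} [Fintype V] [DecidableEq V] (n : ℕ) (hn : 1 ≤ n)
    (G : SimpleGraph V) (hchord : IsChordal G)
    (v : V) (hv : G.IsClique (G.neighborSet v))
    (hconn' : n < Fintype.card {u : V | u ≠ v} ∧ ∀ S : Finset {u : V | u ≠ v},
      S.card < n → ((G.induce {u : V | u ≠ v}).induce ((↑S : Set _)ᶜ)).Connected)
    (T : Finset V) (hT : ↑T ⊆ G.neighborSet v) (hTcard : T.card ≤ n) :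
    ∃ v' : V, v' ≠ v ∧ ∀ x ∈ T, G.Adj v' x := by
  classical
  have hTv : ∀ t ∈ T, G.Adj v t := fun t ht => hT ht
  have hTnv : ∀ t ∈ T, t ≠ v := fun t ht => (hTv t ht).ne'
  have hclique : ∀ s ∈ T, ∀ t ∈ T, s ≠ t → G.Adj s t :=
    fun s hs t ht hne => hv (hT hs) (hT ht) hne
  have hcard2 : n + 1 < Fintype.card V := by
    have h1 := hconn'.1
    have h2 : Fintype.card {u : V | u ≠ v} = Fintype.card V - 1 := Set.card_ne_eq v
    have h3 : 0 < Fintype.card V := Fintype.card_pos_iff.mpr ⟨v⟩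
    omega
  obtain ⟨u0, hu0⟩ : ∃ u0, u0 ∉ insert v T := by
    by_contra h
    push_neg at h
    have hsub : Finset.univ ⊆ insert v T := fun z _ => h z
    have hc := Finset.card_le_card hsub
    have hc2 := Finset.card_insert_le v T
    rw [Finset.card_univ] at hc
    omega
  have hu0T : u0 ∉ T := fun h => hu0 (Finset.mem_insert_of_mem h)
  have hu0v : u0 ≠ v := fun h => hu0 (h ▸ Finset.mem_insert_self v T)
  set S0 : Set V := {z | z ∉ T ∧ z ≠ v} with hS0
  set C : Set V := {a | ∃ (x : ℕ → V) (k : ℕ), x 0 = a ∧ x k = u0 ∧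
    (∀ i < k, G.Adj (x i) (x (i+1))) ∧ ∀ i ≤ k, x i ∈ S0} with hC
  have hCsub : C ⊆ S0 := by
    rintro a ⟨x, k, h0, _, _, hmem⟩
    exact h0 ▸ hmem 0 (Nat.zero_le _)
  have hu0S0 : u0 ∈ S0 := ⟨hu0T, hu0v⟩
  have hu0C : u0 ∈ C := ⟨fun _ => u0, 0, rfl, rfl, by omega, fun i _ => hu0S0⟩
  have hchainC : ∀ (x : ℕ → V) (k : ℕ), x k = u0 → (∀ i < k, G.Adj (x i) (x (i+1))) →
      (∀ i ≤ k, x i ∈ S0) → ∀ i ≤ k, x i ∈ C := by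
    intro x k hk hadj hmem i hik
    refine ⟨fun j => x (i + j), k - i, rfl, ?_, ?_, ?_⟩
    · beta_reduce
      rw [show i + (k - i) = k by omega]
      exact hk
    · intro j hj
      beta_reduce
      have := hadj (i + j) (by omega)
      rwa [show i + (j + 1) = i + j + 1 by omega]
    · intro j hj
      exact hmem (i + j) (by omega)
  have hCconn : ∀ a ∈ C, ∀ b ∈ C, ∃ (x : ℕ → V) (k : ℕ), x 0 = a ∧ x k = b ∧
      (∀ i < k, G.Adj (x i) (x (i+1))) ∧ ∀ i ≤ k, x i ∈ C := by
    rintro a ⟨xa, ka, ha0, hak, haadj, hamem⟩ b ⟨xb, kb, hb0, hbk, hbadj, hbmem⟩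
    refine ⟨fun i => if i ≤ ka then xa i else xb (ka + kb - i), ka + kb, ?_, ?_, ?_, ?_⟩
    · beta_reduce
      rw [if_pos (Nat.zero_le _)]
      exact ha0
    · beta_reduce
      rcases Nat.eq_zero_or_pos kb with h0 | h0
      · rw [if_pos (by omega)]
        rw [show ka + kb = ka by omega, hak, ← hbk, show kb = 0 from h0, hb0]
      · rw [if_neg (by omega), show ka + kb - (ka + kb) = 0 by omega]
        exact hb0
    · intro i hi
      beta_reduce
      rcases Nat.lt_or_ge (i + 1) (ka + 1) with h | h
      · rw [if_pos (by omega), if_pos (by omega)]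
        exact haadj i (by omega)
      · rcases Nat.eq_or_lt_of_le h with heq | hlt
        · rw [if_pos (by omega), if_neg (by omega), show ka + kb - (i + 1) = kb - 1 by omega,
            show i = ka by omega, hak, ← hbk]
          have := hbadj (kb - 1) (by omega)
          rw [show kb - 1 + 1 = kb by omega] at this
          exact this.symm
      
        · rw [if_neg (by omega), if_neg (by omega)]
          have := hbadj (ka + kb - (i+1)) (by omega)
          rw [show ka + kb - (i+1) + 1 = ka + kb - i by omega] at this
          exact this.symm
    · intro i hi
      beta_reduce
      split
      · rename_i h
        exact hchainC xa ka hak haadj hamem i h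
      · rename_i h
        exact hchainC xb kb hbk hbadj hbmem (ka + kb - i) (by omega)
  have hfull : ∀ t ∈ T, ∃ c ∈ C, G.Adj t c := by
    intro t ht
    have htnv : t ≠ v := hTnv t ht
    set S : Finset {u : V | u ≠ v} :=
      Finset.univ.filter (fun z => z.val ∈ T.erase t) with hSdef
    have hScard : S.card < n := by
      have hle : S.card ≤ (T.erase t).card := by
        refine Finset.card_le_card_of_injOn (fun z => z.val)
          (fun z hz => (Finset.mem_filter.mp hz).2) ?_
        intro z1 _ z2 _ h
        exact Subtype.ext h
      have := Finset.card_erase_of_mem ht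
      have hTpos : 0 < T.card := Finset.card_pos.mpr ⟨t, ht⟩
      omega
    have hcc := hconn'.2 S hScard
    have hmemt : (⟨t, htnv⟩ : {u : V | u ≠ v}) ∈ ((↑S : Set {u : V | u ≠ v})ᶜ) := by
      rw [Set.mem_compl_iff, Finset.mem_coe, hSdef, Finset.mem_filter]
      rintro ⟨-, hmem⟩
      exact (Finset.notMem_erase t T) hmem
    have hmemu : (⟨u0, hu0v⟩ : {u : V | u ≠ v}) ∈ ((↑S : Set {u : V | u ≠ v})ᶜ) := by
      rw [Set.mem_compl_iff, Finset.mem_coe, hSdef, Finset.mem_filter]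
      rintro ⟨-, hmem⟩
      exact hu0T (Finset.mem_of_mem_erase hmem)
    obtain ⟨y, k, hy0, hyk, hyadj, hymem⟩ :=
      chain_of_induce_connected (G.induce {u : V | u ≠ v}) _ hcc hmemt hmemu
    set z : ℕ → V := fun i => (y i).val with hz
    have hz0 : z 0 = t := by rw [hz]; beta_reduce; rw [hy0]
    have hzk : z k = u0 := by rw [hz]; beta_reduce; rw [hyk]
    have hzadj : ∀ i < k, G.Adj (z i) (z (i+1)) := fun i hi => hyadj i hi
    have hznv : ∀ i, z i ≠ v := fun i => (y i).2
    have hznT : ∀ i ≤ k, z i ∉ T.erase t := by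
      intro i hi hmemT
      have h2 := hymem i hi
      rw [Set.mem_compl_iff, Finset.mem_coe, hSdef, Finset.mem_filter] at h2
      exact h2 ⟨Finset.mem_univ _, hmemT⟩
    have hk1 : 0 < k := by
      rcases Nat.eq_zero_or_pos k with h0 | h0
      · exfalso
        rw [h0] at hzk
        rw [hz0] at hzk
        exact hu0T (hzk ▸ ht)
      · exact h0
    set m := Nat.findGreatest (fun i => z i = t) k with hm
    have hmP : z m = t := by
      exact Nat.findGreatest_spec (P := fun i => z i = t) (n := k) (Nat.zero_le _) hz0
    have hmle : m ≤ k := Nat.findGreatest_le (P := fun i => z i = t) k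
    have hmlt : m < k := by
      rcases Nat.eq_or_lt_of_le hmle with heq | h
      · exfalso
        rw [heq, hzk] at hmP
        exact hu0T (hmP ▸ ht)
      · exact h
    have hmgr : ∀ i, m < i → i ≤ k → z i ≠ t := by
      intro i h1 h2
      exact Nat.findGreatest_is_greatest (P := fun i => z i = t) (n := k) h1 h2
    have hadj_tc : G.Adj t (z (m+1)) := hmP ▸ hzadj m hmlt
    have hcC : z (m+1) ∈ C := by
      have := hchainC (fun j => z (m+1+j)) (k - (m+1)) ?_ ?_ ?_ 0 (Nat.zero_le _)
      · simpa using this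
      · beta_reduce
        rw [show m + 1 + (k - (m+1)) = k by omega]
        exact hzk
      · intro j hj
        beta_reduce
        have := hzadj (m+1+j) (by omega)
        rwa [show m + 1 + (j+1) = m+1+j+1 by omega]
      · intro j hj
        refine ⟨?_, hznv _⟩
        intro hmemT
        have hne : z (m+1+j) ≠ t := hmgr (m+1+j) (by omega) (by omega)
        exact hznT (m+1+j) (by omega) (Finset.mem_erase.mpr ⟨hne, hmemT⟩)
    exact ⟨z (m+1), hcC, hadj_tc⟩
  obtain ⟨w, hwC, hwT⟩ := lemL hchord C ⟨u0, hu0C⟩ hCconn T hclique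
    (fun t ht htC => (hCsub htC).1 ht) hfull
  exact ⟨w, (hCsub hwC).2, fun t ht => hwT t ht⟩


theorem stmt5 {V : Type*} [Fintype V] [DecidableEq V] (n : ℕ) (hn : 1 ≤ n)
    (G : SimpleGraph V) (hchord : IsChordal G) (hconn : IsNConnectedGraph n G)
    (hnc : G ≠ ⊤) (v : V) (hv : IsSimplicialVertex G v)
    (hconn' : IsNConnectedGraph n (G.induce {u | u ≠ v}))
    (T : Finset V) (hT : ↑T ⊆ G.neighborSet v) (hTcard : T.card ≤ n) :
    ∃ v' : V, v' ≠ v ∧ ∀ x ∈ T, G.Adj v' x := by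
  exact stmt5' n hn G hchord v hv hconn' T hT hTcard
end

section
/- Let G be a graph with a vertex v whose neighbourhood N(v) is contained in the neighbourhood N(u) of some other vertex u ≠ v. Then the neighbourhood complex N(G) is homotopy equivalent to the neighbourhood complex N(G − v). -/
/-! The map `v ↦ u` is a graph homomorphism `G →g G - v` because `N(v) ⊆ N(u)`; pushing the weight
of `v` onto `u` along it retracts `|N(G)|` onto `|N(G - v)|`, a left inverse of the inclusion
(extension by zero). Conversely, a point `x` of `|N(G)|` supported on a face `σ ∋ v` and its fold
both lie in the face `σ ∪ {u}`, since a common neighbour of `σ` is adjacent to `v` and hence to `u`;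
so the straight-line homotopy joins inclusion ∘ retraction to the identity. -/

open Function

namespace geomReal

variable {V : Type*} {K : Set (Finset V)}

lemma exists_face (x : geomReal K) : ∃ σ ∈ K, support x.1 ⊆ σ :=
  let ⟨σ, hσ, hsupp, _⟩ := x.2
  ⟨σ, hσ, hsupp⟩

lemma nonneg (x : geomReal K) (a : V) : 0 ≤ x.1 a :=
  let ⟨_, _, _, hnonneg, _⟩ := x.2
  hnonneg a

lemma hasFiniteSupport (x : geomReal K) : HasFiniteSupport x.1 :=
  let ⟨σ, _, hsupp⟩ := x.exists_face
  σ.finite_toSet.subset hsupp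

lemma finsum_eq_one (x : geomReal K) : ∑ᶠ a, x.1 a = 1 :=
  let ⟨_, _, hsupp, _, hsum⟩ := x.2
  (finsum_eq_sum_of_support_subset _ hsupp).trans hsum

lemma mem_of_finsum_eq_one {x : V → ℝ} (hface : ∃ σ ∈ K, support x ⊆ σ)
    (hnonneg : ∀ a, 0 ≤ x a) (hsum : ∑ᶠ a, x a = 1) :
    ∃ σ ∈ K, (∀ a, x a ≠ 0 → a ∈ σ) ∧ (∀ a, 0 ≤ x a) ∧ ∑ a ∈ σ, x a = 1 :=
  let ⟨σ, hσ, hsupp⟩ := hface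
  ⟨σ, hσ, hsupp, hnonneg, (finsum_eq_sum_of_support_subset _ hsupp).symm.trans hsum⟩

lemma continuous_apply_val {X : Type*} [TopologicalSpace X] {f : X → geomReal K}
    (hf : Continuous f) (a : V) : Continuous fun x => (f x).1 a :=
  (continuous_apply a).comp (continuous_subtype_val.comp hf)

theorem homotopic_of_exists_face {X : Type*} [TopologicalSpace X] (f g : C(X, geomReal K))
    (h : ∀ x, ∃ σ ∈ K, support (f x).1 ⊆ σ ∧ support (g x).1 ⊆ σ) : f.Homotopic g := by
  let H (p : unitInterval × X) (a : V) : ℝ := (1 - p.1 : ℝ) * (f p.2).1 a + p.1 * (g p.2).1 a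
  have hH (p : unitInterval × X) :
      ∃ σ ∈ K, (∀ a, H p a ≠ 0 → a ∈ σ) ∧ (∀ a, 0 ≤ H p a) ∧ ∑ a ∈ σ, H p a = 1 := by
    obtain ⟨t, x⟩ := p
    obtain ⟨σ, hσ, hf, hg⟩ := h x
    refine mem_of_finsum_eq_one ⟨σ, hσ, ?_⟩ (fun a => ?_) ?_
    · refine (support_add _ _).trans (Set.union_subset ?_ ?_)
      · exact (support_mul_subset_right _ _).trans hf
      · exact (support_mul_subset_right _ _).trans hg
    · exact add_nonneg (mul_nonneg (unitInterval.one_minus_nonneg t) ((f x).nonneg a))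
        (mul_nonneg (unitInterval.nonneg t) ((g x).nonneg a))
    · have hf' : HasFiniteSupport fun a => (1 - t : ℝ) * (f x).1 a :=
        (f x).hasFiniteSupport.mul_right _
      have hg' : HasFiniteSupport fun a => (t : ℝ) * (g x).1 a :=
        (g x).hasFiniteSupport.mul_right _
      rw [finsum_add_distrib hf' hg', ← mul_finsum, ← mul_finsum, (f x).finsum_eq_one,
        (g x).finsum_eq_one]
      ring
  refine ⟨⟨⟨fun p => ⟨H p, hH p⟩, ?_⟩, fun x => ?_, fun x => ?_⟩⟩
  · refine continuous_induced_rng.2 (continuous_pi fun a => ?_)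
    have hf : Continuous fun p : unitInterval × X => (f p.2).1 a :=
      continuous_apply_val (f.continuous.comp continuous_snd) a
    have hg : Continuous fun p : unitInterval × X => (g p.2).1 a :=
      continuous_apply_val (g.continuous.comp continuous_snd) a
    exact ((continuous_const.sub (continuous_subtype_val.comp continuous_fst)).mul hf).add
      ((continuous_subtype_val.comp continuous_fst).mul hg)
  · ext a; simp [H]
  · ext a; simp [H]

end geomReal

lemma image_mem_nbhdFaces {V W : Type*} [DecidableEq W] {G : SimpleGraph V} {H : SimpleGraph W}
    (φ : G →g H) {σ : Finset V} (hσ : σ ∈ nbhdFaces G) : σ.image φ ∈ nbhdFaces H := by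
  obtain ⟨w, hw⟩ := hσ
  refine ⟨φ w, fun b hb => ?_⟩
  obtain ⟨a, ha, rfl⟩ := Finset.mem_image.mp hb
  exact φ.map_adj (hw a ha)

lemma finsum_subtype_of_support_subset {V M : Type*} [AddCommMonoid M] {s : Set V} {z : V → M}
    (hz : support z ⊆ s) : ∑ᶠ a : s, z a = ∑ᶠ a, z a := by
  rw [finsum_set_coe_eq_finsum_mem,
    finsum_mem_inter_support_eq' z s Set.univ fun a ha => iff_of_true (hz ha) trivial,
    finsum_mem_univ]

section extendByZero

variable {V M : Type*} (s : Set V) [DecidablePred (· ∈ s)]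

def extendByZero [Zero M] (y : s → M) (a : V) : M :=
  if h : a ∈ s then y ⟨a, h⟩ else 0

variable {s}

section Zero

variable [Zero M]

@[simp]
lemma extendByZero_val (y : s → M) (a : s) : extendByZero s y a = y a := by
  simp [extendByZero]

lemma extendByZero_of_notMem (y : s → M) {a : V} (ha : a ∉ s) : extendByZero s y a = 0 := by
  simp [extendByZero, ha]

lemma extendByZero_restrict {z : V → M} (hz : ∀ a ∉ s, z a = 0) :
    extendByZero s (fun a => z a) = z := by
  funext a
  by_cases ha : a ∈ s
  · exact extendByZero_val _ ⟨a, ha⟩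
  · rw [extendByZero_of_notMem _ ha, hz a ha]

lemma support_extendByZero (y : s → M) :
    support (extendByZero s y) = Subtype.val '' support y := by
  ext a
  by_cases ha : a ∈ s <;> simp [ha, extendByZero]

lemma support_extendByZero_subset (y : s → M) : support (extendByZero s y) ⊆ s := by
  rw [support_extendByZero]
  exact Subtype.coe_image_subset s _

end Zero

lemma finsum_extendByZero [AddCommMonoid M] (y : s → M) :
    ∑ᶠ a, extendByZero s y a = ∑ᶠ a, y a := by
  rw [← finsum_subtype_of_support_subset (support_extendByZero_subset y)]
  simp

lemma continuous_extendByZero [Zero M] [TopologicalSpace M] :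
    Continuous (extendByZero (M := M) s) := by
  refine continuous_pi fun a => ?_
  by_cases ha : a ∈ s
  · simpa [extendByZero, ha] using continuous_apply (⟨a, ha⟩ : s)
  · simpa [extendByZero, ha] using continuous_const

end extendByZero

section fold

variable {V : Type*} [DecidableEq V] {u v : V}

def foldFun (u v : V) (x : V → ℝ) : V → ℝ :=
  x + Pi.single u (x v) - Pi.single v (x v)

lemma foldFun_apply_right (huv : u ≠ v) (x : V → ℝ) : foldFun u v x v = 0 := by
  simp [foldFun, huv.symm]

lemma foldFun_of_apply_right_eq_zero {x : V → ℝ} (hx : x v = 0) : foldFun u v x = x := by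
  simp [foldFun, hx]

lemma foldFun_apply_of_ne {a : V} (hav : a ≠ v) (x : V → ℝ) :
    foldFun u v x a = x a + if a = u then x v else 0 := by
  simp [foldFun, Pi.single_apply, hav]

lemma foldFun_nonneg (huv : u ≠ v) {x : V → ℝ} (hx : ∀ a, 0 ≤ x a) (a : V) :
    0 ≤ foldFun u v x a := by
  by_cases hav : a = v
  · rw [hav, foldFun_apply_right huv]
  · rw [foldFun_apply_of_ne hav]
    have := hx a
    have := hx v
    split_ifs <;> linarith

lemma support_foldFun_subset (huv : u ≠ v) (x : V → ℝ) :
    support (foldFun u v x) ⊆ (fun a => if a = v then u else a) '' support x := by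
  intro a ha
  have hav : a ≠ v := by rintro rfl; exact ha (foldFun_apply_right huv x)
  rw [mem_support, foldFun_apply_of_ne hav] at ha
  by_cases hxa : x a = 0
  · have hau : a = u := by by_contra hau; simp [hau, hxa] at ha
    subst hau
    refine ⟨v, ?_, if_pos rfl⟩
    simpa [hxa] using ha
  · exact ⟨a, hxa, if_neg hav⟩

lemma finsum_foldFun {x : V → ℝ} (hx : HasFiniteSupport x) :
    ∑ᶠ a, foldFun u v x a = ∑ᶠ a, x a := by
  have hsingle (b : V) : HasFiniteSupport (Pi.single b (x v)) :=
    (Set.finite_singleton b).subset Pi.support_single_subset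
  have hsum_single (b : V) : ∑ᶠ a, Pi.single b (x v) a = x v :=
    (finsum_eq_single _ b fun a ha => Pi.single_eq_of_ne ha _).trans (Pi.single_eq_same _ _)
  rw [foldFun, Pi.sub_def, finsum_sub_distrib (hx.add (hsingle u)) (hsingle v), Pi.add_def,
    finsum_add_distrib hx (hsingle u), hsum_single, hsum_single, add_sub_cancel_right]

lemma continuous_foldFun : Continuous (foldFun u v) :=
  (continuous_id.add ((continuous_single u).comp (continuous_apply v))).sub
    ((continuous_single v).comp (continuous_apply v))

end fold

namespace SimpleGraph

variable {V : Type*} {G : SimpleGraph V}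

def foldHom [DecidableEq V] {u v : V} (huv : u ≠ v) (h : G.neighborSet v ⊆ G.neighborSet u) :
    G →g G.induce {w | w ≠ v} where
  toFun a := ⟨if a = v then u else a, by split_ifs with hav; exacts [huv, hav]⟩
  map_rel' {a b} hab := by
    change G.Adj (if a = v then u else a) (if b = v then u else b)
    split_ifs with hav hbv hbv
    · exact absurd (hav.trans hbv.symm) hab.ne
    · subst hav; exact h hab
    · subst hbv; exact (h hab.symm).symm
    · exact hab

lemma extendByZero_mem {s : Set V} [DecidablePred (· ∈ s)]
    (y : geomReal (nbhdFaces (G.induce s))) :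
    ∃ σ ∈ nbhdFaces G, (∀ a, extendByZero s y.1 a ≠ 0 → a ∈ σ) ∧
      (∀ a, 0 ≤ extendByZero s y.1 a) ∧ ∑ a ∈ σ, extendByZero s y.1 a = 1 := by
  classical
  obtain ⟨σ, hσ, hsupp⟩ := y.exists_face
  refine geomReal.mem_of_finsum_eq_one ⟨σ.image (Embedding.induce s).toHom,
    image_mem_nbhdFaces _ hσ, ?_⟩ (fun a => ?_) ?_
  · rw [support_extendByZero, Finset.coe_image]
    exact Set.image_mono hsupp
  · unfold extendByZero
    split_ifs
    exacts [y.nonneg _, le_rfl]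
  · rw [finsum_extendByZero, y.finsum_eq_one]

variable (G) in
def nbhdInclusion (s : Set V) [DecidablePred (· ∈ s)] :
    C(geomReal (nbhdFaces (G.induce s)), geomReal (nbhdFaces G)) where
  toFun y := ⟨extendByZero s y.1, extendByZero_mem y⟩
  continuous_toFun := (continuous_extendByZero.comp continuous_subtype_val).subtype_mk _

variable [DecidableEq V] {u v : V}

lemma foldFun_restrict_mem (huv : u ≠ v) (h : G.neighborSet v ⊆ G.neighborSet u)
    (x : geomReal (nbhdFaces G)) :
    ∃ σ ∈ nbhdFaces (G.induce {w | w ≠ v}),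
      (∀ w : ({w | w ≠ v} : Set V), foldFun u v x.1 w ≠ 0 → w ∈ σ) ∧
      (∀ w : ({w | w ≠ v} : Set V), 0 ≤ foldFun u v x.1 w) ∧ ∑ w ∈ σ, foldFun u v x.1 w = 1 := by
  obtain ⟨σ, hσ, hsupp⟩ := x.exists_face
  refine geomReal.mem_of_finsum_eq_one ⟨σ.image (foldHom huv h),
    image_mem_nbhdFaces _ hσ, fun w hw => ?_⟩ (fun w => foldFun_nonneg huv x.nonneg _) ?_
  · obtain ⟨a, ha, haw⟩ := support_foldFun_subset huv x.1 hw
    exact Finset.mem_image.mpr ⟨a, hsupp ha, Subtype.ext haw⟩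
  · have hsupp_fold : Function.support (foldFun u v x.1) ⊆ {w | w ≠ v} := fun w hw hwv =>
      hw (hwv ▸ foldFun_apply_right huv x.1)
    rw [finsum_subtype_of_support_subset hsupp_fold, finsum_foldFun x.hasFiniteSupport,
      x.finsum_eq_one]

def foldRetraction (huv : u ≠ v) (h : G.neighborSet v ⊆ G.neighborSet u) :
    C(geomReal (nbhdFaces G), geomReal (nbhdFaces (G.induce {w | w ≠ v}))) where
  toFun x := ⟨fun w => foldFun u v x.1 w, foldFun_restrict_mem huv h x⟩
  continuous_toFun := by
    refine Continuous.subtype_mk (continuous_pi fun w => ?_) _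
    exact (continuous_apply w.1).comp (continuous_foldFun.comp continuous_subtype_val)

lemma foldRetraction_comp_nbhdInclusion (huv : u ≠ v) (h : G.neighborSet v ⊆ G.neighborSet u) :
    (foldRetraction huv h).comp (G.nbhdInclusion {w | w ≠ v}) = ContinuousMap.id _ := by
  ext y w
  have hv : extendByZero {w | w ≠ v} y.1 v = 0 := extendByZero_of_notMem _ (not_not.mpr rfl)
  change foldFun u v (extendByZero _ y.1) w = y.1 w
  rw [foldFun_of_apply_right_eq_zero hv, extendByZero_val]

lemma nbhdInclusion_comp_foldRetraction_homotopic (huv : u ≠ v)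
    (h : G.neighborSet v ⊆ G.neighborSet u) :
    ((G.nbhdInclusion {w | w ≠ v}).comp (foldRetraction huv h)).Homotopic
      (ContinuousMap.id _) := by
  refine geomReal.homotopic_of_exists_face _ _ fun x => ?_
  have hfold : ((G.nbhdInclusion {w | w ≠ v}).comp (foldRetraction huv h) x).1 =
      foldFun u v x.1 := by
    change extendByZero {w | w ≠ v} (fun w => foldFun u v x.1 w) = _
    refine extendByZero_restrict fun a ha => ?_
    obtain rfl : a = v := not_not.mp ha
    exact foldFun_apply_right huv x.1
  rw [hfold]
  obtain ⟨σ, ⟨w, hw⟩, hsupp⟩ := x.exists_face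
  by_cases hv : v ∈ σ
  · refine ⟨insert u σ, ⟨w, ?_⟩, ?_, hsupp.trans (by simp)⟩
    · intro b hb
      obtain rfl | hb := Finset.mem_insert.mp hb
      · exact (h (hw v hv).symm).symm
      · exact hw b hb
    · intro b hb
      obtain ⟨a, ha, rfl⟩ := support_foldFun_subset huv x.1 hb
      simp only [Finset.coe_insert]
      split_ifs
      exacts [Set.mem_insert _ _, Set.mem_insert_of_mem _ (hsupp ha)]
  · have hxv : x.1 v = 0 := by_contra fun hxv => hv (hsupp hxv)
    exact ⟨σ, ⟨w, hw⟩, (foldFun_of_apply_right_eq_zero hxv).symm ▸ hsupp, hsupp⟩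

end SimpleGraph

theorem stmt9 {V : Type*} (G : SimpleGraph V) (u v : V) (huv : u ≠ v)
    (h : G.neighborSet v ⊆ G.neighborSet u) :
    Nonempty (ContinuousMap.HomotopyEquiv (geomReal (nbhdFaces G))
      (geomReal (nbhdFaces (G.induce {w | w ≠ v})))) := by
  classical
  refine ⟨⟨SimpleGraph.foldRetraction huv h, G.nbhdInclusion {w | w ≠ v},
    SimpleGraph.nbhdInclusion_comp_foldRetraction_homotopic huv h, ?_⟩⟩
  rw [SimpleGraph.foldRetraction_comp_nbhdInclusion huv h]
end
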